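/- Fix real parameters M_m > 0, M_r > 0, v_{m1} < v_{m2}, v_{r2}, and set c := v_{r2} − v_{m2} + v_{m1}. Suppose U is such that z := exp((v_{m2} − v_{m1})/(4·M_m))·f((c − U)/(4·M_m)) > −1. Then (M_m/M_r)·κ(z) > 0, the argument f((M_m/M_r)·κ(z)) of the outer κ in R_r exceeds −1, and R_r(U, v_{r2}) = R_m(U, v_{r2}) = 2·M_m·κ(z). (Hence the Schwarzschild radial function is continuous across the second shell V = v_{r2}.) -/

import Mathlib

/-- `f x = (x - 1) * exp x`; in the paper this is `κ⁻¹`. -/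
noncomputable def f (x : ℝ) : ℝ := (x - 1) * Real.exp x

/-- The Kruskal function `κ`, the inverse of the restriction of `f` to `(0, ∞)`. -/
noncomputable def kappa (z : ℝ) : ℝ := Function.invFunOn f (Set.Ioi 0) z

/-
On `(0, ∞)` the function `f` is strictly increasing from `f 0 = -1`, so every positive `w` has
`f w > -1` and `κ (f w) = w`. At `V = v_{r2}` the exponential prefactor of the outer `κ` in `R_r`
is `1`, hence `R_r = 2 M_r κ (f ((M_m / M_r) κ z)) = 2 M_m κ z`; and `v_{r2} - c = v_{m2} - v_{m1}`
makes the argument of `κ` in `R_m` equal to `z`.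
-/

open Set

lemma hasDerivAt_f (x : ℝ) : HasDerivAt f (x * Real.exp x) x :=
  (((hasDerivAt_id' x).sub_const 1).fun_mul (Real.hasDerivAt_exp x)).congr_deriv (by ring)

lemma continuous_f : Continuous f := by
  unfold f; fun_prop

lemma f_zero : f 0 = -1 := by simp [f]

lemma strictMonoOn_f : StrictMonoOn f (Ici 0) := by
  refine strictMonoOn_of_deriv_pos (convex_Ici 0) continuous_f.continuousOn fun x hx => ?_
  rw [interior_Ici] at hx
  rw [(hasDerivAt_f x).deriv]
  exact mul_pos hx (Real.exp_pos x)

lemma neg_one_lt_f {w : ℝ} (hw : 0 < w) : -1 < f w :=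
  f_zero ▸ strictMonoOn_f self_mem_Ici hw.le hw

lemma surjOn_f : SurjOn f (Ioi 0) (Ioi (-1)) := by
  rintro z (hz : -1 < z)
  have hz_le : z ≤ f (z + 2) := by
    have : z + 1 ≤ (z + 1) * Real.exp (z + 2) :=
      le_mul_of_one_le_right (by linarith) (Real.one_le_exp (by linarith))
    unfold f; linarith
  obtain ⟨x, hx, hfx⟩ := intermediate_value_Ioc (by linarith : (0 : ℝ) ≤ z + 2)
    continuous_f.continuousOn (show z ∈ Ioc (f 0) (f (z + 2)) from ⟨f_zero ▸ hz, hz_le⟩)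
  exact ⟨x, hx.1, hfx⟩

lemma kappa_pos {z : ℝ} (hz : -1 < z) : 0 < kappa z :=
  Function.invFunOn_mem (surjOn_f hz)

lemma kappa_f {w : ℝ} (hw : 0 < w) : kappa (f w) = w :=
  (strictMonoOn_f.injOn.mono Ioi_subset_Ici_self).leftInvOn_invFunOn hw

theorem radius_continuous_across_second_shell_general (Mm Mr vm1 vm2 vr2 c : ℝ)
    (hMm : Mm > 0) (hMr : Mr > 0) (hc : c = vr2 - vm2 + vm1)
    (Rm Rr : ℝ → ℝ → ℝ)
    (hRm : ∀ U V : ℝ,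
      Rm U V = 2 * Mm * kappa (Real.exp ((V - c) / (4 * Mm)) * f ((c - U) / (4 * Mm))))
    (hRr : ∀ U V : ℝ,
      Rr U V = 2 * Mr * kappa (Real.exp ((V - vr2) / (4 * Mr)) *
        f ((Mm / Mr) * kappa (Real.exp ((vm2 - vm1) / (4 * Mm)) * f ((c - U) / (4 * Mm))))))
    (U : ℝ)
    (hz : Real.exp ((vm2 - vm1) / (4 * Mm)) * f ((c - U) / (4 * Mm)) > -1) :
    (Mm / Mr) * kappa (Real.exp ((vm2 - vm1) / (4 * Mm)) * f ((c - U) / (4 * Mm))) > 0 ∧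
    f ((Mm / Mr) * kappa (Real.exp ((vm2 - vm1) / (4 * Mm)) * f ((c - U) / (4 * Mm)))) > -1 ∧
    Rr U vr2 = Rm U vr2 ∧
    Rm U vr2 = 2 * Mm * kappa (Real.exp ((vm2 - vm1) / (4 * Mm)) * f ((c - U) / (4 * Mm))) := by
  set z := Real.exp ((vm2 - vm1) / (4 * Mm)) * f ((c - U) / (4 * Mm))
  have hw : 0 < Mm / Mr * kappa z := mul_pos (div_pos hMm hMr) (kappa_pos hz)
  have hRm_shell : Rm U vr2 = 2 * Mm * kappa z := by
    rw [hRm, show vr2 - c = vm2 - vm1 by rw [hc]; ring]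
  refine ⟨hw, neg_one_lt_f hw, ?_, hRm_shell⟩
  rw [hRr, hRm_shell, sub_self, zero_div, Real.exp_zero, one_mul, kappa_f hw]
  field_simp

theorem radius_continuous_across_second_shell (Mm Mr vm1 vm2 vr2 c : ℝ)
    (hMm : Mm > 0) (hMr : Mr > 0) (hv : vm1 < vm2) (hc : c = vr2 - vm2 + vm1)
    (Rm Rr : ℝ → ℝ → ℝ)
    (hRm : ∀ U V : ℝ,
      Rm U V = 2 * Mm * kappa (Real.exp ((V - c) / (4 * Mm)) * f ((c - U) / (4 * Mm))))
    (hRr : ∀ U V : ℝ,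
      Rr U V = 2 * Mr * kappa (Real.exp ((V - vr2) / (4 * Mr)) *
        f ((Mm / Mr) * kappa (Real.exp ((vm2 - vm1) / (4 * Mm)) * f ((c - U) / (4 * Mm))))))
    (U : ℝ)
    (hz : Real.exp ((vm2 - vm1) / (4 * Mm)) * f ((c - U) / (4 * Mm)) > -1) :
    (Mm / Mr) * kappa (Real.exp ((vm2 - vm1) / (4 * Mm)) * f ((c - U) / (4 * Mm))) > 0 ∧
    f ((Mm / Mr) * kappa (Real.exp ((vm2 - vm1) / (4 * Mm)) * f ((c - U) / (4 * Mm)))) > -1 ∧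
    Rr U vr2 = Rm U vr2 ∧
    Rm U vr2 = 2 * Mm * kappa (Real.exp ((vm2 - vm1) / (4 * Mm)) * f ((c - U) / (4 * Mm))) :=
  radius_continuous_across_second_shell_general Mm Mr vm1 vm2 vr2 c hMm hMr hc Rm Rr hRm hRr U hz
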